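/- arXiv:1610.09035 — 2 statements merged into one kernel-verified Lean document; each statement's English description precedes it below -/
import Mathlib

section
/- Total count of classes via fibers: with the covering setup and Π₂/Γ₂ finite, if for each class [β̄] ∈ R[φ̄, ψ̄] one chooses a lift β ∈ Π₂, then the cardinality of R[φ, ψ] equals the sum over [β̄] ∈ R[φ̄, ψ̄] of the cardinality of the image of î₂^β : R[τ_β φ', ψ'] → R[τ_β φ, ψ]. -/
/-- The doubly-twisted conjugacy setoid on G₂. -/
def dtc {G₁ G₂ : Type*} [Group G₁] [Group G₂] (φ ψ : G₁ →* G₂) : Setoid G₂ where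
  r α β := ∃ γ : G₁, α = (ψ γ)⁻¹ * β * φ γ
  iseqv := by
    constructor
    · intro α; exact ⟨1, by simp⟩
    · rintro α β ⟨γ, rfl⟩
      exact ⟨γ⁻¹, by simp [mul_assoc]⟩
    · rintro α β c ⟨γ, rfl⟩ ⟨δ, rfl⟩
      exact ⟨δ * γ, by simp [mul_assoc]⟩

/-- The Reidemeister set `R[φ,ψ]`. -/
abbrev ReidemeisterSet {G₁ G₂ : Type*} [Group G₁] [Group G₂] (φ ψ : G₁ →* G₂) :=
  Quotient (dtc φ ψ)

/-- Conjugation `τ_β` composed with `φ`. -/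
def conjComp {G₁ G₂ : Type*} [Group G₁] [Group G₂] (β : G₂) (φ : G₁ →* G₂) : G₁ →* G₂ :=
  (MulAut.conj β).toMonoidHom.comp φ

/-- Restriction of `φ : G₁ →* G₂` to a homomorphism `Γ₁ →* Γ₂`. -/
def restrictHom {G₁ G₂ : Type*} [Group G₁] [Group G₂] {Γ₁ : Subgroup G₁} {Γ₂ : Subgroup G₂}
    (φ : G₁ →* G₂) (h : ∀ x ∈ Γ₁, φ x ∈ Γ₂) : Γ₁ →* Γ₂ where
  toFun x := ⟨φ x, h x x.2⟩
  map_one' := Subtype.ext (by simp)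
  map_mul' a b := Subtype.ext (by simp)

/-!
The projection `Π₂ → Π₂/Γ₂` induces a map `π : R[φ, ψ] → R[φ̄, ψ̄]`, so `R[φ, ψ]` is the disjoint
union of the fibres of `π`. The fibre over `π [β]` is `{[γβ] : γ ∈ Γ₂}`: if `[ᾱ] = [β̄]`, twisting
`α` by a lift of the element of `Π₁/Γ₁` that witnesses this yields a representative `α'` of `[α]`
with `α' ≡ β mod Γ₂`. Since `ρ_β` is injective, this fibre has the cardinality of the image of
`î₂^β`.
-/

namespace ReidemeisterSet

variable {G₁ G₂ : Type*} [Group G₁] [Group G₂]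

/-- The map `ρ_β : R[τ_β φ, ψ] → R[φ, ψ]`, `[x] ↦ [xβ]`. -/
def shift (φ ψ : G₁ →* G₂) (β : G₂) : ReidemeisterSet (conjComp β φ) ψ → ReidemeisterSet φ ψ :=
  Quotient.map (· * β) <| by
    rintro _ x ⟨γ, rfl⟩
    exact ⟨γ, by simp only [conjComp, MonoidHom.comp_apply, MulEquiv.coe_toMonoidHom,
      MulAut.conj_apply]; group⟩

lemma shift_injective (φ ψ : G₁ →* G₂) (β : G₂) : Function.Injective (shift φ ψ β) := by
  rintro ⟨x⟩ ⟨y⟩ h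
  obtain ⟨γ, hγ : x * β = (ψ γ)⁻¹ * (y * β) * φ γ⟩ := Quotient.exact h
  refine Quotient.sound ⟨γ, mul_right_cancel (b := β) ?_⟩
  simp only [conjComp, MonoidHom.comp_apply, MulEquiv.coe_toMonoidHom, MulAut.conj_apply]
  rw [hγ]
  group

variable {Γ₁ : Subgroup G₁} {Γ₂ : Subgroup G₂} [Γ₁.Normal] [Γ₂.Normal]
  {φ ψ : G₁ →* G₂} (hφ : Γ₁ ≤ Γ₂.comap φ) (hψ : Γ₁ ≤ Γ₂.comap ψ)

def toQuotient :
    ReidemeisterSet φ ψ →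
      ReidemeisterSet (QuotientGroup.map Γ₁ Γ₂ φ hφ) (QuotientGroup.map Γ₁ Γ₂ ψ hψ) :=
  Quotient.map QuotientGroup.mk <| by
    rintro _ x ⟨γ, rfl⟩
    exact ⟨γ, by simp⟩

@[simp]
lemma toQuotient_mk (x : G₂) :
    toQuotient hφ hψ (Quotient.mk _ x) = Quotient.mk _ (x : G₂ ⧸ Γ₂) := rfl

lemma toQuotient_mk_mul_of_mem {γ : G₂} (hγ : γ ∈ Γ₂) (β : G₂) :
    toQuotient hφ hψ (Quotient.mk _ (γ * β)) = toQuotient hφ hψ (Quotient.mk _ β) := by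
  simp [(QuotientGroup.eq_one_iff γ).mpr hγ]

lemma exists_mem_mul_of_toQuotient_eq {α β : G₂}
    (h : toQuotient hφ hψ (Quotient.mk _ α) = toQuotient hφ hψ (Quotient.mk _ β)) :
    ∃ γ ∈ Γ₂, Quotient.mk (dtc φ ψ) α = Quotient.mk _ (γ * β) := by
  obtain ⟨g, hg⟩ := Quotient.exact h.symm
  obtain ⟨g, rfl⟩ := QuotientGroup.mk_surjective g
  set α' := (ψ g)⁻¹ * α * φ g
  have hα' : (α' : G₂ ⧸ Γ₂) = β := by simp [α', hg]
  refine ⟨α' * β⁻¹, ?_, (Quotient.sound (s := dtc φ ψ) ⟨g, by simp [α']⟩).symm⟩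
  rw [← QuotientGroup.eq_one_iff, QuotientGroup.mk_mul, hα', QuotientGroup.mk_inv, mul_inv_cancel]

lemma range_shift_mk_eq_preimage_toQuotient (β : G₂) :
    Set.range (fun γ : Γ₂ => shift φ ψ β (Quotient.mk _ γ)) =
      toQuotient hφ hψ ⁻¹' {toQuotient hφ hψ (Quotient.mk _ β)} := by
  refine Set.ext fun x => ⟨?_, fun h => ?_⟩
  · rintro ⟨γ, rfl⟩
    exact toQuotient_mk_mul_of_mem hφ hψ γ.2 β
  · induction x using Quotient.inductionOn with | _ α => ?_
    obtain ⟨γ, hγ, hα⟩ := exists_mem_mul_of_toQuotient_eq hφ hψ h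
    exact ⟨⟨γ, hγ⟩, hα.symm⟩

lemma mk_range_mk_subgroup_eq_mk_fiber (β : G₂) :
    Cardinal.mk (Set.range (fun γ : Γ₂ => Quotient.mk (dtc (conjComp β φ) ψ) γ)) =
      Cardinal.mk (toQuotient hφ hψ ⁻¹' {toQuotient hφ hψ (Quotient.mk _ β)}) := by
  rw [← range_shift_mk_eq_preimage_toQuotient, ← Cardinal.mk_image_eq (shift_injective φ ψ β),
    ← Set.range_comp]
  rfl

end ReidemeisterSet

open ReidemeisterSet in
theorem card_reidemeister_eq_sum_fibers_general {G₁ G₂ : Type*} [Group G₁] [Group G₂]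
    (Γ₁ : Subgroup G₁) (Γ₂ : Subgroup G₂) [Γ₁.Normal] [Γ₂.Normal]
    (φ ψ : G₁ →* G₂) (hφ : ∀ x ∈ Γ₁, φ x ∈ Γ₂) (hψ : ∀ x ∈ Γ₁, ψ x ∈ Γ₂)
    (σ : ReidemeisterSet (QuotientGroup.map Γ₁ Γ₂ φ (fun x hx => hφ x hx))
          (QuotientGroup.map Γ₁ Γ₂ ψ (fun x hx => hψ x hx)) → G₂)
    (hσ : ∀ c, Quotient.mk (dtc (QuotientGroup.map Γ₁ Γ₂ φ (fun x hx => hφ x hx))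
            (QuotientGroup.map Γ₁ Γ₂ ψ (fun x hx => hψ x hx))) ((σ c : G₂ ⧸ Γ₂)) = c) :
    Cardinal.mk (ReidemeisterSet φ ψ) =
      Cardinal.sum (fun c =>
        Cardinal.mk (Set.range (fun γ : Γ₂ =>
          Quotient.mk (dtc (conjComp (σ c) φ) ψ) ((γ : G₂))))) := by
  have hφ' : Γ₁ ≤ Γ₂.comap φ := hφ
  have hψ' : Γ₁ ≤ Γ₂.comap ψ := hψ
  rw [Cardinal.mk_congr (Equiv.sigmaFiberEquiv (toQuotient hφ' hψ')).symm, Cardinal.mk_sigma]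
  refine congrArg Cardinal.sum (funext fun c => ?_)
  rw [mk_range_mk_subgroup_eq_mk_fiber hφ' hψ', toQuotient_mk, hσ]
  rfl

/-- Total count of classes via fibers: choosing for each class `[β̄] ∈ R[φ̄,ψ̄]` a lift
`β ∈ G₂`, the cardinality of `R[φ,ψ]` equals the sum over `[β̄]` of the cardinality of
the image of `î₂^β : R[τ_β φ', ψ'] → R[τ_β φ, ψ]` (which is the set of classes of
elements of `Γ₂`). -/
theorem card_reidemeister_eq_sum_fibers {G₁ G₂ : Type*} [Group G₁] [Group G₂]
    (Γ₁ : Subgroup G₁) (Γ₂ : Subgroup G₂) [Γ₁.Normal] [Γ₂.Normal]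
    [Γ₁.FiniteIndex] [Γ₂.FiniteIndex]
    (φ ψ : G₁ →* G₂) (hφ : ∀ x ∈ Γ₁, φ x ∈ Γ₂) (hψ : ∀ x ∈ Γ₁, ψ x ∈ Γ₂)
    (σ : ReidemeisterSet (QuotientGroup.map Γ₁ Γ₂ φ (fun x hx => hφ x hx))
          (QuotientGroup.map Γ₁ Γ₂ ψ (fun x hx => hψ x hx)) → G₂)
    (hσ : ∀ c, Quotient.mk (dtc (QuotientGroup.map Γ₁ Γ₂ φ (fun x hx => hφ x hx))
            (QuotientGroup.map Γ₁ Γ₂ ψ (fun x hx => hψ x hx))) ((σ c : G₂ ⧸ Γ₂)) = c) :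
    Cardinal.mk (ReidemeisterSet φ ψ) =
      Cardinal.sum (fun c =>
        Cardinal.mk (Set.range (fun γ : Γ₂ =>
          Quotient.mk (dtc (conjComp (σ c) φ) ψ) ((γ : G₂))))) :=
  card_reidemeister_eq_sum_fibers_general Γ₁ Γ₂ φ ψ hφ hψ σ hσ
end

section
/- Fiber size formula for the induced map on Reidemeister sets: in the covering setup with finite quotients, for β ∈ Π₂ and γ ∈ Γ₂ with [γ] ∈ im(î₂^β) ⊆ R[τ_β φ, ψ], the number of classes in R[τ_β φ', ψ'] mapping to [γ] under î₂^β equals the index [coin(τ_{β̄} φ̄, ψ̄) : u₁(coin(τ_{γβ} φ, ψ))], where u₁ : Π₁ → Π₁/Γ₁ is the projection. -/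
/-- The coincidence subgroup `coin(φ,ψ) = {x : φ x = ψ x}`. -/
def coin {G₁ G₂ : Type*} [Group G₁] [Group G₂] (φ ψ : G₁ →* G₂) : Subgroup G₁ where
  carrier := {x : G₁ | φ x = ψ x}
  one_mem' := by simp
  mul_mem' := by intro a b ha hb; simp_all [Set.mem_setOf_eq]
  inv_mem' := by intro a ha; simp_all [Set.mem_setOf_eq]

/-! `g • α = ψ g * α * (φ g)⁻¹` is an action of `G₁` on `G₂` whose orbits are the classes of
`R[φ, ψ]`, with stabiliser `coin(τ_α φ, ψ)` at `α`. For `α ∈ Γ₂`, the `g` with `g • α ∈ Γ₂` form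
the preimage `S` of `coin(φ̄, ψ̄)`, and since `Γ₁` is normal, `g • α` and `h • α` are in the same
`Γ₁`-orbit iff `g⁻¹ h ∈ coin(τ_α φ, ψ) ⊔ Γ₁`. So the fiber is `S ⧸ (coin(τ_α φ, ψ) ⊔ Γ₁)`,
whose order is the relative index computed in `G₁ ⧸ Γ₁`. -/

theorem conjComp_conjComp {G₁ G₂ : Type*} [Group G₁] [Group G₂] (a b : G₂) (φ : G₁ →* G₂) :
    conjComp a (conjComp b φ) = conjComp (a * b) φ := by
  ext; simp [conjComp, mul_assoc]

theorem conjComp_quotientMap {G₁ G₂ : Type*} [Group G₁] [Group G₂]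
    {Γ₁ : Subgroup G₁} {Γ₂ : Subgroup G₂} [Γ₁.Normal] [Γ₂.Normal] (β : G₂) (φ : G₁ →* G₂)
    (hφ : Γ₁ ≤ Γ₂.comap φ) (hφβ : Γ₁ ≤ Γ₂.comap (conjComp β φ)) :
    conjComp (β : G₂ ⧸ Γ₂) (QuotientGroup.map Γ₁ Γ₂ φ hφ) =
      QuotientGroup.map Γ₁ Γ₂ (conjComp β φ) hφβ := by
  refine QuotientGroup.monoidHom_ext _ (MonoidHom.ext fun x => ?_)
  simp [conjComp]

theorem mul_mul_inv_eq_iff_inv_mul_mem_coin {G₁ G₂ : Type*} [Group G₁] [Group G₂]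
    {φ ψ : G₁ →* G₂} (α : G₂) (a b : G₁) :
    ψ a * α * (φ a)⁻¹ = ψ b * α * (φ b)⁻¹ ↔ a⁻¹ * b ∈ coin (conjComp α φ) ψ := by
  change _ ↔ α * φ (a⁻¹ * b) * α⁻¹ = ψ (a⁻¹ * b)
  rw [map_mul, map_mul, map_inv, map_inv, eq_comm (a := α * _ * _), inv_mul_eq_iff_eq_mul,
    eq_mul_inv_iff_mul_eq, ← mul_inv_eq_iff_eq_mul]
  simp only [mul_assoc]
  exact eq_comm

theorem Subgroup.inv_mul_mem_sup_normal_iff {G : Type*} [Group G] (C N : Subgroup G) [N.Normal]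
    (a b : G) : a⁻¹ * b ∈ C ⊔ N ↔ ∃ n ∈ N, a⁻¹ * n * b ∈ C := by
  rw [Subgroup.mem_sup_of_normal_right]
  constructor
  · rintro ⟨c, hc, n, hn, h⟩
    refine ⟨b * n⁻¹ * b⁻¹, ‹N.Normal›.conj_mem _ (inv_mem hn) b, ?_⟩
    rw [← mul_inv_eq_iff_eq_mul] at h
    simpa [← h, mul_assoc] using hc
  · rintro ⟨n, hn, hc⟩
    exact ⟨_, hc, b⁻¹ * n⁻¹ * b, by simpa using ‹N.Normal›.conj_mem _ (inv_mem hn) b⁻¹, by group⟩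

theorem Subgroup.relIndex_map_mk' {G : Type*} [Group G] (N : Subgroup G) [N.Normal]
    (A : Subgroup G) (B : Subgroup (G ⧸ N)) :
    (A.map (QuotientGroup.mk' N)).relIndex B = (A ⊔ N).relIndex (B.comap (QuotientGroup.mk' N)) :=
  calc _ = (A.map (QuotientGroup.mk' N)).relIndex
          ((B.comap (QuotientGroup.mk' N)).map (QuotientGroup.mk' N)) := by
        rw [Subgroup.map_comap_eq_self_of_surjective (QuotientGroup.mk'_surjective N)]
    _ = _ := by rw [← Subgroup.relIndex_comap, Subgroup.comap_map_eq, QuotientGroup.ker_mk']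

theorem Subgroup.index_eq_card_of_surjective {G Y : Type*} [Group G] (L : Subgroup G)
    {f : G → Y} (hf : Function.Surjective f) (hL : ∀ a b, f a = f b ↔ a⁻¹ * b ∈ L) :
    L.index = Nat.card Y :=
  Nat.card_congr <| (Quotient.congrRight fun a b =>
    QuotientGroup.leftRel_apply.trans (hL a b).symm).trans
      (Setoid.quotientKerEquivOfSurjective f hf)

section Fiber

variable {G₁ G₂ : Type*} [Group G₁] [Group G₂] {Γ₁ : Subgroup G₁} {Γ₂ : Subgroup G₂}
  {φ ψ : G₁ →* G₂} (hφ : ∀ x ∈ Γ₁, φ x ∈ Γ₂) (hψ : ∀ x ∈ Γ₁, ψ x ∈ Γ₂)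

abbrev ReidemeisterFiber (α : Γ₂) : Type _ :=
  {c : ReidemeisterSet (restrictHom φ hφ) (restrictHom ψ hψ) //
    ∃ α' : Γ₂, Quotient.mk _ α' = c ∧
      Quotient.mk (dtc φ ψ) (α' : G₂) = Quotient.mk (dtc φ ψ) (α : G₂)}

variable [Γ₁.Normal] [Γ₂.Normal]

abbrev coinMod : Subgroup G₁ :=
  (coin (QuotientGroup.map Γ₁ Γ₂ φ hφ) (QuotientGroup.map Γ₁ Γ₂ ψ hψ)).comap
    (QuotientGroup.mk' Γ₁)

theorem mem_coinMod_iff {α : G₂} (hα : α ∈ Γ₂) {g : G₁} :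
    g ∈ coinMod hφ hψ ↔ ψ g * α * (φ g)⁻¹ ∈ Γ₂ := by
  change QuotientGroup.mk (φ g) = (QuotientGroup.mk (ψ g) : G₂ ⧸ Γ₂) ↔ _
  rw [QuotientGroup.eq, (inferInstance : Γ₂.Normal).mem_comm_iff (a := ψ g * α), ← mul_assoc,
    Subgroup.mul_mem_cancel_right _ hα]

def fiberMap (α : Γ₂) (g : coinMod hφ hψ) : ReidemeisterFiber hφ hψ α :=
  ⟨Quotient.mk _ ⟨ψ g * α * (φ g)⁻¹, (mem_coinMod_iff hφ hψ α.2).1 g.2⟩, _, rfl,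
    Quotient.sound ⟨(g : G₁)⁻¹, by simp⟩⟩

theorem fiberMap_surjective (α : Γ₂) : Function.Surjective (fiberMap hφ hψ α) := by
  rintro ⟨_, α', rfl, hα'⟩
  obtain ⟨x, hx⟩ := Quotient.exact hα'
  have hx' : ψ x⁻¹ * α * (φ x⁻¹)⁻¹ = α' := by simp [hx]
  exact ⟨⟨x⁻¹, (mem_coinMod_iff hφ hψ α.2).2 (hx' ▸ α'.2)⟩,
    Subtype.ext (congrArg (Quotient.mk _) (Subtype.ext hx'))⟩

theorem fiberMap_eq_iff (α : Γ₂) (a b : coinMod hφ hψ) :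
    fiberMap hφ hψ α a = fiberMap hφ hψ α b ↔
      a⁻¹ * b ∈ (coin (conjComp (α : G₂) φ) ψ ⊔ Γ₁).subgroupOf (coinMod hφ hψ) := by
  rw [Subgroup.mem_subgroupOf, Subgroup.coe_mul, Subgroup.coe_inv,
    Subgroup.inv_mul_mem_sup_normal_iff, fiberMap, fiberMap, Subtype.mk.injEq, Quotient.eq]
  change (∃ m : Γ₁, _) ↔ _
  constructor
  · rintro ⟨m, hm⟩
    refine ⟨(m : G₁)⁻¹, inv_mem m.2, ?_⟩
    rw [mul_assoc, ← mul_mul_inv_eq_iff_inv_mul_mem_coin]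
    simpa [restrictHom, mul_assoc] using congrArg Subtype.val hm
  · rintro ⟨n, hn, hc⟩
    refine ⟨⟨n⁻¹, inv_mem hn⟩, Subtype.ext ?_⟩
    rw [mul_assoc, ← mul_mul_inv_eq_iff_inv_mul_mem_coin] at hc
    simpa [restrictHom, mul_assoc] using hc

theorem card_reidemeisterFiber (α : Γ₂) :
    Nat.card (ReidemeisterFiber hφ hψ α) =
      ((coin (conjComp (α : G₂) φ) ψ).map (QuotientGroup.mk' Γ₁)).relIndex
        (coin (QuotientGroup.map Γ₁ Γ₂ φ hφ) (QuotientGroup.map Γ₁ Γ₂ ψ hψ)) := by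
  rw [Subgroup.relIndex_map_mk']
  exact (Subgroup.index_eq_card_of_surjective _ (fiberMap_surjective hφ hψ α)
    (fiberMap_eq_iff hφ hψ α)).symm

end Fiber

theorem fiber_size_formula_general {G₁ G₂ : Type*} [Group G₁] [Group G₂]
    (Γ₁ : Subgroup G₁) (Γ₂ : Subgroup G₂) [Γ₁.Normal] [Γ₂.Normal]
    (φ ψ : G₁ →* G₂) (hφ : ∀ x ∈ Γ₁, φ x ∈ Γ₂) (hψ : ∀ x ∈ Γ₁, ψ x ∈ Γ₂)
    (hφβ : ∀ (β : G₂), ∀ x ∈ Γ₁, conjComp β φ x ∈ Γ₂)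
    (β : G₂) (γ : Γ₂) :
    Nat.card {c : ReidemeisterSet (restrictHom (conjComp β φ) (hφβ β)) (restrictHom ψ hψ) //
        ∃ γ' : Γ₂,
          Quotient.mk (dtc (restrictHom (conjComp β φ) (hφβ β)) (restrictHom ψ hψ)) γ' = c ∧
          Quotient.mk (dtc (conjComp β φ) ψ) ((γ' : G₂)) =
            Quotient.mk (dtc (conjComp β φ) ψ) ((γ : G₂))} =
    (Subgroup.map (QuotientGroup.mk' Γ₁) (coin (conjComp ((γ : G₂) * β) φ) ψ)).relIndex
      (coin (conjComp ((β : G₂ ⧸ Γ₂)) (QuotientGroup.map Γ₁ Γ₂ φ (fun x hx => hφ x hx)))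
            (QuotientGroup.map Γ₁ Γ₂ ψ (fun x hx => hψ x hx))) := by
  rw [← conjComp_conjComp]
  convert card_reidemeisterFiber (hφβ β) hψ γ using 3
  exact conjComp_quotientMap β φ _ (hφβ β)

/-- Fiber size formula (Kim–Lee, Lemma 2.1): the number of classes of
`R[τ_β φ', ψ']` mapping under `î₂^β` to the class of `γ ∈ Γ₂` equals the index
`[coin(τ_β̄ φ̄, ψ̄) : u₁(coin(τ_{γβ} φ, ψ))]`. -/
theorem fiber_size_formula {G₁ G₂ : Type*} [Group G₁] [Group G₂]
    (Γ₁ : Subgroup G₁) (Γ₂ : Subgroup G₂) [Γ₁.Normal] [Γ₂.Normal]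
    [Γ₁.FiniteIndex] [Γ₂.FiniteIndex]
    (φ ψ : G₁ →* G₂) (hφ : ∀ x ∈ Γ₁, φ x ∈ Γ₂) (hψ : ∀ x ∈ Γ₁, ψ x ∈ Γ₂)
    (hφβ : ∀ (β : G₂), ∀ x ∈ Γ₁, conjComp β φ x ∈ Γ₂)
    (β : G₂) (γ : Γ₂) :
    Nat.card {c : ReidemeisterSet (restrictHom (conjComp β φ) (hφβ β)) (restrictHom ψ hψ) //
        ∃ γ' : Γ₂,
          Quotient.mk (dtc (restrictHom (conjComp β φ) (hφβ β)) (restrictHom ψ hψ)) γ' = c ∧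
          Quotient.mk (dtc (conjComp β φ) ψ) ((γ' : G₂)) =
            Quotient.mk (dtc (conjComp β φ) ψ) ((γ : G₂))} =
    (Subgroup.map (QuotientGroup.mk' Γ₁) (coin (conjComp ((γ : G₂) * β) φ) ψ)).relIndex
      (coin (conjComp ((β : G₂ ⧸ Γ₂)) (QuotientGroup.map Γ₁ Γ₂ φ (fun x hx => hφ x hx)))
            (QuotientGroup.map Γ₁ Γ₂ ψ (fun x hx => hψ x hx))) :=
  fiber_size_formula_general Γ₁ Γ₂ φ ψ hφ hψ hφβ β γ
end
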